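/- arXiv:1504.02526 — 3 statements merged into one kernel-verified Lean document; each statement's English description precedes it below -/
import Mathlib

section
/- Fix an integer K ≥ 1 and reals C > 0, λ > 0. Suppose that for every 1-Lipschitz function f : [0,1] → ℝ there exist reals c_0, …, c_K ∈ [−C, C] such that sup_{x ∈ [0,1]} |f(x) − Σ_{i=0}^K c_i B_{i,K}(x)| ≤ λ. Then for any two probability measures P, Q on [0,1], Tran(P, Q) ≤ C · Σ_{i=0}^K |fq_i(P) − fq_i(Q)| + 2λ. -/
open MeasureTheory ENNReal Set

/-- Transportation (Wasserstein-1) distance between two measures `P` and `Q` on `X`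
with respect to a cost/metric `d`, defined as the infimum over all couplings of the
expected cost. -/
noncomputable def tran {X : Type*} [MeasurableSpace X] (d : X → X → ℝ)
    (P Q : Measure X) : ℝ≥0∞ :=
  ⨅ (μ : Measure (X × X)) (_ : μ.map Prod.fst = P ∧ μ.map Prod.snd = Q),
    ∫⁻ p, ENNReal.ofReal (d p.1 p.2) ∂μ

/-- The Bernstein basis polynomial `B_{i,K}(x) = C(K,i) xⁱ (1-x)^{K-i}`. -/
noncomputable def bern (K i : ℕ) (x : ℝ) : ℝ :=
  (K.choose i : ℝ) * x ^ i * (1 - x) ^ (K - i)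

/-- `fq_i(θ) = ∫ B_{i,K}(x) dθ(x)`, the frequency vector of `θ`. -/
noncomputable def fq (K : ℕ) (θ : Measure ℝ) (i : ℕ) : ℝ :=
  ∫ x, bern K i x ∂θ

/-! Couple `P` and `Q` through their quantile functions on `(0, 1)`. By Fubini the cost of this
coupling is at most `∫ |F_P - F_Q|`, since `x` lies between the two quantiles at `t` exactly when
`t` lies between the two cdfs at `x`. Conversely, if `s = ±1` is the sign of `F_Q - F_P`, the
1-Lipschitz primitive `f x = ∫₀ˣ s` has `∫ f dP - ∫ f dQ = ∫₀¹ |F_P - F_Q|`, again by Fubini.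
Replacing `f` by its Bernstein approximation `∑ cᵢ B_{i,K}` costs `λ` under each measure, and
`∑ cᵢ (fqᵢ(P) - fqᵢ(Q)) ≤ C ∑ |fqᵢ(P) - fqᵢ(Q)|`. -/

open ProbabilityTheory

lemma volume_Ioo_inter_Iic {c : ℝ} (hc : c ≤ 1) :
    volume (Ioo 0 1 ∩ Iic c) = ENNReal.ofReal c := by
  refine le_antisymm ?_ ?_
  · calc volume (Ioo 0 1 ∩ Iic c) ≤ volume (Ioc 0 c) := measure_mono fun t ht => ⟨ht.1.1, ht.2⟩
      _ = ENNReal.ofReal c := by simp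
  · calc ENNReal.ofReal c = volume (Ioo 0 c) := by simp
      _ ≤ volume (Ioo 0 1 ∩ Iic c) :=
        measure_mono fun t ht => ⟨⟨ht.1, ht.2.trans_le hc⟩, ht.2.le⟩

lemma lipschitzWith_intervalIntegral {s : ℝ → ℝ} {C : NNReal} (hs : ∀ u, ‖s u‖ ≤ C)
    (hsi : ∀ a b, IntervalIntegrable s volume a b) (a : ℝ) :
    LipschitzWith C fun x => ∫ u in a..x, s u :=
  LipschitzWith.of_dist_le_mul fun x y => by
    rw [dist_eq_norm, intervalIntegral.integral_interval_sub_left (hsi a x) (hsi a y),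
      Real.dist_eq]
    exact intervalIntegral.norm_integral_le_of_norm_le_const fun u _ => hs u

lemma abs_integral_sub_integral_le {α : Type*} [MeasurableSpace α] {μ : Measure α}
    [IsProbabilityMeasure μ] {f g : α → ℝ} (hf : Integrable f μ) (hg : Integrable g μ) {lam : ℝ}
    (h : ∀ᵐ x ∂μ, |f x - g x| ≤ lam) : |∫ x, f x ∂μ - ∫ x, g x ∂μ| ≤ lam := by
  rw [← integral_sub hf hg]
  simpa using norm_integral_le_of_norm_le_const (μ := μ)
    (h.mono fun x hx => (Real.norm_eq_abs _).trans_le hx)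

/-- Only meaningful for `t ∈ (0, 1)`: otherwise the set may be empty or unbounded below and
`sInf` returns the junk value `0`. -/
noncomputable def quantile (P : Measure ℝ) (t : ℝ) : ℝ :=
  sInf {x | t ≤ cdf P x}

section Quantile

variable (P : Measure ℝ)

lemma bddBelow_setOf_le_cdf {t : ℝ} (ht : 0 < t) : BddBelow {x | t ≤ cdf P x} := by
  obtain ⟨a, ha⟩ := ((tendsto_cdf_atBot P).eventually (gt_mem_nhds ht)).exists_forall_of_atBot
  exact ⟨a, fun x hx => le_of_not_gt fun hxa => (ha x hxa.le).not_ge hx⟩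

lemma nonempty_setOf_le_cdf {t : ℝ} (ht : t < 1) : {x | t ≤ cdf P x}.Nonempty :=
  ((tendsto_cdf_atTop P).eventually (lt_mem_nhds ht)).exists.imp fun _ h => h.le

lemma quantile_le_iff {t : ℝ} (ht : t ∈ Ioo 0 1) (x : ℝ) :
    quantile P t ≤ x ↔ t ≤ cdf P x := by
  refine ⟨fun h => le_trans ?_ ((cdf P).mono h),
    fun h => csInf_le (bddBelow_setOf_le_cdf P ht.1) h⟩
  have above : ∀ y, quantile P t < y → t ≤ cdf P y := fun y hy => by
    obtain ⟨z, hz, hzy⟩ := exists_lt_of_csInf_lt (nonempty_setOf_le_cdf P ht.2) hy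
    exact hz.trans ((cdf P).mono hzy.le)
  exact ge_of_tendsto (((cdf P).right_continuous _).mono Ioi_subset_Ici_self).tendsto
    (eventually_nhdsWithin_of_forall above)

lemma le_cdf_quantile {t : ℝ} (ht : t ∈ Ioo 0 1) : t ≤ cdf P (quantile P t) :=
  (quantile_le_iff P ht _).1 le_rfl

lemma monotoneOn_quantile : MonotoneOn (quantile P) (Ioo 0 1) := fun _ hs _ ht hst =>
  (quantile_le_iff P hs _).2 (hst.trans (le_cdf_quantile P ht))

lemma aemeasurable_quantile : AEMeasurable (quantile P) (volume.restrict (Ioo 0 1)) :=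
  aemeasurable_restrict_of_monotoneOn measurableSet_Ioo (monotoneOn_quantile P)

lemma map_quantile [IsProbabilityMeasure P] :
    (volume.restrict (Ioo 0 1)).map (quantile P) = P := by
  have : IsProbabilityMeasure (volume.restrict (Ioo (0 : ℝ) 1)) := ⟨by simp⟩
  have := Measure.isProbabilityMeasure_map (aemeasurable_quantile P)
  refine Measure.ext_of_Iic _ _ fun x => ?_
  have preimage : quantile P ⁻¹' Iic x ∩ Ioo 0 1 = Ioo 0 1 ∩ Iic (cdf P x) := by
    ext t
    simp only [mem_inter_iff, mem_preimage, mem_Iic]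
    exact ⟨fun h => ⟨h.2, (quantile_le_iff P h.2 x).1 h.1⟩,
      fun h => ⟨(quantile_le_iff P h.1 x).2 h.2, h.1⟩⟩
  rw [Measure.map_apply_of_aemeasurable (aemeasurable_quantile P) measurableSet_Iic,
    Measure.restrict_apply' measurableSet_Ioo, preimage,
    volume_Ioo_inter_Iic (cdf_le_one P x), ofReal_cdf]

end Quantile

lemma setOf_mem_Ioc_cdf_eq_Ico_quantile (P Q : Measure ℝ) {t : ℝ} (ht : t ∈ Ioo 0 1) :
    {x | t ∈ Ioc (min (cdf P x) (cdf Q x)) (max (cdf P x) (cdf Q x))}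
      = Ico (min (quantile P t) (quantile Q t)) (max (quantile P t) (quantile Q t)) := by
  ext x
  simp only [mem_ofPred_eq, mem_Ioc, mem_Ico, le_max_iff, min_le_iff, ← not_le, le_min_iff,
    max_le_iff, quantile_le_iff P ht, quantile_le_iff Q ht]
  tauto

lemma lintegral_abs_quantile_sub_le (P Q : Measure ℝ) :
    ∫⁻ t in Ioo 0 1, ENNReal.ofReal |quantile P t - quantile Q t|
      ≤ ∫⁻ x, ENNReal.ofReal |cdf P x - cdf Q x| := by
  set S : Set (ℝ × ℝ) :=
    {p | p.1 ∈ Ioc (min (cdf P p.2) (cdf Q p.2)) (max (cdf P p.2) (cdf Q p.2))}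
  have hFP : Measurable fun p : ℝ × ℝ => cdf P p.2 := (cdf P).mono.measurable.comp measurable_snd
  have hFQ : Measurable fun p : ℝ × ℝ => cdf Q p.2 := (cdf Q).mono.measurable.comp measurable_snd
  have hS : MeasurableSet S :=
    (measurableSet_lt (hFP.min hFQ) measurable_fst).inter
      (measurableSet_le measurable_fst (hFP.max hFQ))
  calc ∫⁻ t in Ioo 0 1, ENNReal.ofReal |quantile P t - quantile Q t|
      = ∫⁻ t in Ioo 0 1, volume (Prod.mk t ⁻¹' S) := by
        refine setLIntegral_congr_fun measurableSet_Ioo fun t ht => ?_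
        rw [show Prod.mk t ⁻¹' S = _ from setOf_mem_Ioc_cdf_eq_Ico_quantile P Q ht,
          Real.volume_Ico, max_sub_min_eq_abs']
    _ ≤ ∫⁻ t, volume (Prod.mk t ⁻¹' S) := setLIntegral_le_lintegral _ _
    _ = ∫⁻ x, volume ((fun t => (t, x)) ⁻¹' S) := by
        rw [← Measure.prod_apply hS, Measure.prod_apply_symm hS]
    _ = ∫⁻ x, ENNReal.ofReal |cdf P x - cdf Q x| := by
        simp only [S, preimage_ofPred_eq, ofPred_mem_eq, Real.volume_Ioc, max_sub_min_eq_abs']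

/-- Only meaningful for `t ∈ (0, 1)`: otherwise the set may be empty or unbounded below and
`sInf` returns the junk value `0`. -/
noncomputable def quantileCoupling (P Q : Measure ℝ) : Measure (ℝ × ℝ) :=
  (volume.restrict (Ioo 0 1)).map fun t => (quantile P t, quantile Q t)

lemma tran_le_lintegral_quantile (P Q : Measure ℝ) [IsProbabilityMeasure P]
    [IsProbabilityMeasure Q] {d : ℝ → ℝ → ℝ} (hd : Measurable (Function.uncurry d)) :
    tran d P Q ≤ ∫⁻ t in Ioo 0 1, ENNReal.ofReal (d (quantile P t) (quantile Q t)) := by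
  have hq := (aemeasurable_quantile P).prodMk (aemeasurable_quantile Q)
  have marginals : (quantileCoupling P Q).map Prod.fst = P ∧
      (quantileCoupling P Q).map Prod.snd = Q := by
    simp only [quantileCoupling,
      AEMeasurable.map_map_of_aemeasurable measurable_fst.aemeasurable hq,
      AEMeasurable.map_map_of_aemeasurable measurable_snd.aemeasurable hq]
    exact ⟨map_quantile P, map_quantile Q⟩
  calc tran d P Q ≤ ∫⁻ p, ENNReal.ofReal (d p.1 p.2) ∂quantileCoupling P Q := by
        unfold tran; exact iInf₂_le (quantileCoupling P Q) marginals
    _ = _ := lintegral_map' hd.ennreal_ofReal.aemeasurable hq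

section SupportedOnUnitInterval

variable {P : Measure ℝ} [IsProbabilityMeasure P]

lemma cdf_eq_zero_of_neg (hP : P (Icc 0 1)ᶜ = 0) {x : ℝ} (hx : x < 0) : cdf P x = 0 := by
  have : P (Iic x) = 0 :=
    measure_mono_null (fun y hy => fun hy' => (hy'.1.trans hy).not_gt hx) hP
  simp [cdf_eq_real, measureReal_def, this]

lemma cdf_eq_one_of_one_le (hP : P (Icc 0 1)ᶜ = 0) {x : ℝ} (hx : 1 ≤ x) : cdf P x = 1 := by
  have : P (Iic x)ᶜ = 0 := measure_mono_null (compl_subset_compl.2 fun y hy => hy.2.trans hx) hP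
  simp [cdf_eq_real, measureReal_def, (prob_compl_eq_zero_iff measurableSet_Iic).1 this]

lemma integrable_of_continuousOn_Icc (hP : P (Icc 0 1)ᶜ = 0) {f : ℝ → ℝ}
    (hf : ContinuousOn f (Icc 0 1)) : Integrable f P := by
  rw [← Measure.restrict_eq_self_of_ae_mem (ae_iff.2 hP)]
  exact hf.integrableOn_compact isCompact_Icc

lemma integral_intervalIntegral_eq_integral_mul_one_sub_cdf (hP : P (Icc 0 1)ᶜ = 0) {s : ℝ → ℝ}
    (hs : IntegrableOn s (Icc 0 1)) :
    ∫ x, (∫ u in 0..x, s u) ∂P = ∫ u in Icc 0 1, s u * (1 - cdf P u) := by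
  have slice : ∀ x ∈ Icc (0 : ℝ) 1,
      ∫ u in 0..x, s u = ∫ u in Icc 0 1, (Iio x).indicator s u := fun x hx => by
    have : Icc 0 1 ∩ Iio x = Ico 0 x := by
      ext u
      exact ⟨fun h => ⟨h.1.1, h.2⟩, fun h => ⟨⟨h.1, h.2.le.trans hx.2⟩, h.2⟩⟩
    rw [setIntegral_indicator measurableSet_Iio, this, intervalIntegral.integral_of_le hx.1,
      integral_Ico_eq_integral_Ioc]
  have hG : Integrable (fun p : ℝ × ℝ => (Iio p.1).indicator s p.2)
      (P.prod (volume.restrict (Icc 0 1))) :=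
    (hs.comp_snd P).indicator (measurableSet_lt measurable_snd measurable_fst)
  calc ∫ x, (∫ u in 0..x, s u) ∂P = ∫ x, (∫ u in Icc 0 1, (Iio x).indicator s u) ∂P :=
        integral_congr_ae ((ae_iff.2 hP).mono slice)
    _ = ∫ u in Icc 0 1, ∫ x, (Iio x).indicator s u ∂P := integral_integral_swap hG
    _ = ∫ u in Icc 0 1, s u * (1 - cdf P u) := by
        congr 1
        ext u
        have : (fun x => (Iio x).indicator s u) = (Ioi u).indicator fun _ => s u := by
          ext x; simp [indicator]
        rw [this, integral_indicator_const _ measurableSet_Ioi, ← compl_Iic,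
          probReal_compl_eq_one_sub measurableSet_Iic, cdf_eq_real, smul_eq_mul, mul_comm]

end SupportedOnUnitInterval

lemma abs_cdf_sub_cdf_le_one (P Q : Measure ℝ) (x : ℝ) : |cdf P x - cdf Q x| ≤ 1 :=
  abs_sub_le_of_nonneg_of_le (cdf_nonneg P x) (cdf_le_one P x) (cdf_nonneg Q x) (cdf_le_one Q x)

lemma lintegral_abs_cdf_sub_eq_ofReal_integral_Icc (P Q : Measure ℝ) [IsProbabilityMeasure P]
    [IsProbabilityMeasure Q]
    (hP : P (Icc 0 1)ᶜ = 0) (hQ : Q (Icc 0 1)ᶜ = 0) :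
    ∫⁻ x, ENNReal.ofReal |cdf P x - cdf Q x|
      = ENNReal.ofReal (∫ x in Icc 0 1, |cdf P x - cdf Q x|) := by
  have support : (fun x => ENNReal.ofReal |cdf P x - cdf Q x|).support ⊆ Icc 0 1 := by
    intro x hx
    by_contra hx'
    rcases not_and_or.1 hx' with h | h
    · simp [cdf_eq_zero_of_neg hP (not_le.1 h), cdf_eq_zero_of_neg hQ (not_le.1 h)] at hx
    · simp [cdf_eq_one_of_one_le hP (not_le.1 h).le, cdf_eq_one_of_one_le hQ (not_le.1 h).le] at hx
  have integrable : IntegrableOn (fun x => |cdf P x - cdf Q x|) (Icc 0 1) :=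
    Measure.integrableOn_of_bounded (M := 1) (by simp)
      ((cdf P).mono.measurable.sub (cdf Q).mono.measurable).abs.aestronglyMeasurable
      (ae_of_all _ fun x => by simpa using abs_cdf_sub_cdf_le_one P Q x)
  rw [← setLIntegral_eq_of_support_subset support,
    ofReal_integral_eq_lintegral_ofReal integrable (ae_of_all _ fun _ => abs_nonneg _)]

lemma exists_lipschitzWith_one_integral_sub_eq_integral_abs_cdf_sub (P Q : Measure ℝ)
    [IsProbabilityMeasure P] [IsProbabilityMeasure Q] (hP : P (Icc 0 1)ᶜ = 0)
    (hQ : Q (Icc 0 1)ᶜ = 0) :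
    ∃ f : ℝ → ℝ, LipschitzWith 1 f ∧
      ∫ x, f x ∂P - ∫ x, f x ∂Q = ∫ u in Icc 0 1, |cdf P u - cdf Q u| := by
  set s : ℝ → ℝ := fun u => if cdf P u ≤ cdf Q u then 1 else -1
  have hs_meas : Measurable s :=
    Measurable.ite (measurableSet_le (cdf P).mono.measurable (cdf Q).mono.measurable)
      measurable_const measurable_const
  have hs_le : ∀ u, ‖s u‖ ≤ (1 : NNReal) := fun u => by simp only [s]; split_ifs <;> simp
  have hs_int : ∀ a b, IntervalIntegrable s volume a b := fun a b =>
    (intervalIntegrable_const (c := (1 : ℝ))).mono_fun hs_meas.aestronglyMeasurable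
      (ae_of_all _ fun u => (hs_le u).trans (by simp))
  have hs_mul_int : ∀ R : Measure ℝ, IntegrableOn (fun u => s u * (1 - cdf R u)) (Icc 0 1) :=
    fun R => Measure.integrableOn_of_bounded (M := 1) (by simp)
      (hs_meas.mul (measurable_const.sub (cdf R).mono.measurable)).aestronglyMeasurable
      (ae_of_all _ fun u => by
        simpa [abs_mul] using mul_le_one₀ (hs_le u) (abs_nonneg _)
          (abs_sub_le_of_nonneg_of_le zero_le_one le_rfl (cdf_nonneg R u) (cdf_le_one R u)))
  have hsI : IntegrableOn s (Icc 0 1) :=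
    (integrableOn_Icc_iff_integrableOn_Ioc (by simp)).2 (hs_int 0 1).1
  refine ⟨fun x => ∫ u in 0..x, s u, lipschitzWith_intervalIntegral hs_le hs_int 0, ?_⟩
  rw [integral_intervalIntegral_eq_integral_mul_one_sub_cdf hP hsI,
    integral_intervalIntegral_eq_integral_mul_one_sub_cdf hQ hsI,
    ← integral_sub (hs_mul_int P) (hs_mul_int Q)]
  refine setIntegral_congr_fun measurableSet_Icc fun u _ => ?_
  simp only [s]
  split_ifs with h
  · rw [abs_of_nonpos (sub_nonpos.2 h)]; ring
  · rw [abs_of_pos (sub_pos.2 (not_le.1 h))]; ring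

lemma continuous_bern (K i : ℕ) : Continuous (bern K i) := by
  unfold bern
  fun_prop

lemma integral_sum_mul_bern {P : Measure ℝ} [IsProbabilityMeasure P] (hP : P (Icc 0 1)ᶜ = 0)
    (K : ℕ) (c : Fin (K + 1) → ℝ) :
    ∫ x, ∑ i : Fin (K + 1), c i * bern K i x ∂P = ∑ i : Fin (K + 1), c i * fq K P i := by
  rw [integral_finsetSum _ fun (i : Fin (K + 1)) _ =>
    (integrable_of_continuousOn_Icc hP (continuous_bern K i).continuousOn).const_mul (c i)]
  simp only [integral_const_mul, fq]

lemma integral_sub_le_of_forall_abs_sub_sum_mul_bern_le {P Q : Measure ℝ} [IsProbabilityMeasure P]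
    [IsProbabilityMeasure Q] (hP : P (Icc 0 1)ᶜ = 0) (hQ : Q (Icc 0 1)ᶜ = 0) {K : ℕ} {C lam : ℝ}
    {f : ℝ → ℝ} (hf : ContinuousOn f (Icc 0 1)) {c : Fin (K + 1) → ℝ}
    (hc : ∀ i, c i ∈ Icc (-C) C)
    (happrox : ∀ x ∈ Icc 0 1, |f x - ∑ i : Fin (K + 1), c i * bern K i x| ≤ lam) :
    ∫ x, f x ∂P - ∫ x, f x ∂Q ≤ C * ∑ i : Fin (K + 1), |fq K P i - fq K Q i| + 2 * lam := by
  have hg : Continuous fun x => ∑ i : Fin (K + 1), c i * bern K i x :=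
    continuous_finsetSum _ fun i _ => continuous_const.mul (continuous_bern K i)
  have approx_of {μ : Measure ℝ} [IsProbabilityMeasure μ] (hμ : μ (Icc 0 1)ᶜ = 0) :
      |∫ x, f x ∂μ - ∑ i : Fin (K + 1), c i * fq K μ i| ≤ lam := by
    rw [← integral_sum_mul_bern hμ]
    exact abs_integral_sub_integral_le (integrable_of_continuousOn_Icc hμ hf)
      (integrable_of_continuousOn_Icc hμ hg.continuousOn) ((ae_iff.2 hμ).mono happrox)
  have sum_le : ∑ i : Fin (K + 1), c i * fq K P i - ∑ i : Fin (K + 1), c i * fq K Q i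
      ≤ C * ∑ i : Fin (K + 1), |fq K P i - fq K Q i| := by
    rw [← Finset.sum_sub_distrib, Finset.mul_sum]
    gcongr with i
    rw [← mul_sub]
    exact (le_abs_self _).trans (by rw [abs_mul]; gcongr; exact abs_le.2 (hc i))
  linarith [abs_le.1 (approx_of hP), abs_le.1 (approx_of hQ)]

theorem stmt6_general (K : ℕ) (C lam : ℝ)
    (happrox : ∀ f : ℝ → ℝ, LipschitzOnWith 1 f (Set.Icc (0:ℝ) 1) →
      ∃ c : Fin (K + 1) → ℝ, (∀ i, c i ∈ Set.Icc (-C) C) ∧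
        ∀ x ∈ Set.Icc (0:ℝ) 1, |f x - ∑ i : Fin (K + 1), c i * bern K i x| ≤ lam)
    (P Q : Measure ℝ) [IsProbabilityMeasure P] [IsProbabilityMeasure Q]
    (hP : P (Set.Icc (0:ℝ) 1)ᶜ = 0) (hQ : Q (Set.Icc (0:ℝ) 1)ᶜ = 0) :
    tran (fun x y => |x - y|) P Q
      ≤ ENNReal.ofReal (C * ∑ i : Fin (K + 1), |fq K P i - fq K Q i| + 2 * lam) := by
  obtain ⟨f, hf, hf_eq⟩ := exists_lipschitzWith_one_integral_sub_eq_integral_abs_cdf_sub P Q hP hQ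
  obtain ⟨c, hc, hfc⟩ := happrox f hf.lipschitzOnWith
  calc tran (fun x y => |x - y|) P Q
      ≤ ∫⁻ t in Ioo 0 1, ENNReal.ofReal |quantile P t - quantile Q t| :=
        tran_le_lintegral_quantile P Q (measurable_fst.sub measurable_snd).abs
    _ ≤ ∫⁻ x, ENNReal.ofReal |cdf P x - cdf Q x| := lintegral_abs_quantile_sub_le P Q
    _ = ENNReal.ofReal (∫ x, f x ∂P - ∫ x, f x ∂Q) := by
        rw [lintegral_abs_cdf_sub_eq_ofReal_integral_Icc P Q hP hQ, hf_eq]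
    _ ≤ _ := ENNReal.ofReal_le_ofReal <|
        integral_sub_le_of_forall_abs_sub_sum_mul_bern_le hP hQ hf.continuous.continuousOn hc hfc

/-- if every 1-Lipschitz function on `[0,1]` can be approximated within
`λ` in sup norm by a combination `Σ c_i B_{i,K}` with coefficients in `[−C, C]`, then
for any probability measures `P, Q` on `[0,1]`,
`Tran(P,Q) ≤ C · Σ_i |fq_i(P) − fq_i(Q)| + 2λ`. -/
theorem stmt6 (K : ℕ) (hK : 1 ≤ K) (C lam : ℝ) (hC : 0 < C) (hlam : 0 < lam)
    (happrox : ∀ f : ℝ → ℝ, LipschitzOnWith 1 f (Set.Icc (0:ℝ) 1) →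
      ∃ c : Fin (K + 1) → ℝ, (∀ i, c i ∈ Set.Icc (-C) C) ∧
        ∀ x ∈ Set.Icc (0:ℝ) 1, |f x - ∑ i : Fin (K + 1), c i * bern K i x| ≤ lam)
    (P Q : Measure ℝ) [IsProbabilityMeasure P] [IsProbabilityMeasure Q]
    (hP : P (Set.Icc (0:ℝ) 1)ᶜ = 0) (hQ : Q (Set.Icc (0:ℝ) 1)ᶜ = 0) :
    tran (fun x y => |x - y|) P Q
      ≤ ENNReal.ofReal (C * ∑ i : Fin (K + 1), |fq K P i - fq K Q i| + 2 * lam) :=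
  stmt6_general K C lam happrox P Q hP hQ
end

section
/- Let θ be an isotropic probability measure on Δ_n whose support is contained in V ∩ Δ_n for some k-dimensional linear subspace V ⊆ ℝ^n. Let ε ∈ (0,1) and C ≥ 5k²/ε, and let H = [−C/n, C/n]^n ⊆ ℝ^n. Then θ(H) ≥ 1 − ε. -/
open MeasureTheory ENNReal Set

/-- The simplex `Δ_n` of probability vectors in `ℝⁿ`. -/
def simplex (n : ℕ) : Set (Fin n → ℝ) :=
  {x | (∀ i, 0 ≤ x i) ∧ ∑ i, x i = 1}

/-- A mixture `θ` on `Δ_n` is isotropic if `r_j = ∫ x_j dθ ∈ [1/(2n), 2/n]` for all `j`. -/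
def Isotropic {n : ℕ} (θ : Measure (Fin n → ℝ)) : Prop :=
  ∀ j : Fin n, (∫ x, x j ∂θ) ∈ Set.Icc (1 / (2 * (n : ℝ))) (2 / (n : ℝ))

/-!
Pick indices `u₁, …, u_k` maximizing `|det|` of the coordinate functionals `x ↦ x_{uᵢ}` restricted
to the `k`-dimensional space `V`. By Cramer's rule every coordinate functional on `V` is then a
combination of these with coefficients in `[-1, 1]`, so on `V ∩ Δ_n` every coordinate is bounded
by `g x = x_{u₁} + ⋯ + x_{u_k}`. Isotropy gives `∫ g dθ ≤ 2k/n`, and Markov's inequality bounds the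
mass outside `H` by `2k/C ≤ ε`.
-/

def IsBarycentricSpanner (K : Type*) {ι κ W : Type*} [Fintype κ] [Field K] [LinearOrder K]
    [AddCommGroup W] [Module K W] (w : ι → W) (u : κ → ι) : Prop :=
  ∀ j, ∃ c : κ → K, (∀ i, |c i| ≤ 1) ∧ ∑ i, c i • w (u i) = w j

section BarycentricSpanner

variable {K R ι κ W : Type*} [Fintype κ] [DecidableEq κ] [AddCommGroup W]

theorem Module.Basis.exists_det_comp_ne_zero [Fintype ι] [CommRing R] [Nontrivial R]
    [Module R W] (e : Module.Basis κ R W) {w : ι → W} (hw : Submodule.span R (range w) = ⊤) :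
    ∃ u : κ → ι, e.det (w ∘ u) ≠ 0 := by
  classical
  by_contra! h
  choose c hc using fun i =>
    (Submodule.mem_span_range_iff_exists_fun R).1 (hw ▸ Submodule.mem_top : e i ∈ _)
  -- Expanding `det e = 1` multilinearly along `e i = ∑ j, c i j • w j`.
  have hexpand : e.det e = ∑ r : κ → ι, e.det fun i => c i (r i) • w (r i) := by
    conv_lhs => rw [← funext hc]
    exact e.det.toMultilinearMap.map_sum _
  have hterm (r : κ → ι) : (e.det fun i => c i (r i) • w (r i)) = 0 := by
    rw [← AlternatingMap.coe_multilinearMap, MultilinearMap.map_smul_univ]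
    simp [← Function.comp_def, h]
  simp [e.det_self, hterm] at hexpand

variable [Field K] [LinearOrder K] [IsStrictOrderedRing K] [Module K W]

theorem isBarycentricSpanner_of_forall_abs_det_le (e : Module.Basis κ K W) {w : ι → W}
    {u : κ → ι} (hmax : ∀ u', |e.det (w ∘ u')| ≤ |e.det (w ∘ u)|) (hne : e.det (w ∘ u) ≠ 0) :
    IsBarycentricSpanner K w u := by
  obtain ⟨hli, hspan⟩ := e.is_basis_iff_det.2 (isUnit_iff_ne_zero.2 hne)
  set b := Module.Basis.mk hli hspan.ge
  intro j
  refine ⟨fun i => b.coord i (w j), fun i => ?_, ?_⟩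
  · -- Cramer's rule: `det (w ∘ u) * cᵢ = det (w ∘ update u i j)`.
    have hcramer := LinearMap.congr_fun (e.det_smul_mk_coord_eq_det_update hli hspan.ge i) (w j)
    simp only [LinearMap.smul_apply, smul_eq_mul, MultilinearMap.toLinearMap_apply,
      AlternatingMap.coe_multilinearMap, ← Function.comp_update] at hcramer
    have hle := hmax (Function.update u i j)
    rw [← hcramer, abs_mul] at hle
    exact (mul_le_iff_le_one_right (abs_pos.2 hne)).1 hle
  · simpa [b] using b.sum_repr (w j)

theorem exists_isBarycentricSpanner [Fintype ι] (e : Module.Basis κ K W) {w : ι → W}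
    (hw : Submodule.span K (range w) = ⊤) : ∃ u : κ → ι, IsBarycentricSpanner K w u := by
  obtain ⟨u₀, hu₀⟩ := e.exists_det_comp_ne_zero hw
  have : Nonempty (κ → ι) := ⟨u₀⟩
  obtain ⟨u, hu⟩ := Finite.exists_max fun u => |e.det (w ∘ u)|
  exact ⟨u, isBarycentricSpanner_of_forall_abs_det_le e hu
    (abs_pos.1 ((abs_pos.2 hu₀).trans_le (hu u₀)))⟩

end BarycentricSpanner

namespace Submodule

variable {K ι : Type*} [Field K] [Fintype ι]

theorem span_range_proj_comp_subtype (V : Submodule K (ι → K)) :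
    span K (range fun j => (LinearMap.proj j).comp V.subtype) = ⊤ := by
  set S := span K (range fun j => (LinearMap.proj j).comp V.subtype)
  have hcoann : S.dualCoannihilator = ⊥ := by
    refine eq_bot_iff.2 fun x hx => ?_
    rw [mem_dualCoannihilator] at hx
    ext j
    simpa using hx _ (subset_span (mem_range_self j))
  rw [← Subspace.dualCoannihilator_dualAnnihilator_eq (W := S), hcoann, dualAnnihilator_bot]

theorem exists_apply_le_sum_of_nonneg [LinearOrder K] [IsStrictOrderedRing K]
    (V : Submodule K (ι → K)) :
    ∃ u : Fin (Module.finrank K V) → ι, ∀ x ∈ V, 0 ≤ x → ∀ j, x j ≤ ∑ i, x (u i) := by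
  obtain ⟨u, hu⟩ := exists_isBarycentricSpanner (Module.finBasis K V).dualBasis
    V.span_range_proj_comp_subtype
  refine ⟨u, fun x hx hx0 j => ?_⟩
  obtain ⟨c, hc1, hc⟩ := hu j
  have hxj : ∑ i, c i * x (u i) = x j := by
    simpa using LinearMap.congr_fun hc ⟨x, hx⟩
  rw [← hxj]
  exact Finset.sum_le_sum fun i _ => mul_le_of_le_one_left (hx0 (u i)) (abs_le.1 (hc1 i)).2

end Submodule

theorem apply_le_one_of_mem_simplex {n : ℕ} {x : Fin n → ℝ} (hx : x ∈ simplex n) (j : Fin n) :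
    x j ≤ 1 :=
  hx.2 ▸ Finset.single_le_sum (fun i _ => hx.1 i) (Finset.mem_univ j)

theorem integrable_apply_of_ae_mem_simplex {n : ℕ} {μ : Measure (Fin n → ℝ)}
    [IsFiniteMeasure μ] (h : ∀ᵐ x ∂μ, x ∈ simplex n) (j : Fin n) :
    Integrable (fun x => x j) μ :=
  .of_bound (measurable_pi_apply j).aestronglyMeasurable 1 <| h.mono fun x hx => by
    rw [Real.norm_eq_abs, abs_of_nonneg (hx.1 j)]
    exact apply_le_one_of_mem_simplex hx j

theorem measure_compl_cube_le_integral_div {ι : Type*} {μ : Measure (ι → ℝ)} [IsFiniteMeasure μ]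
    {g : (ι → ℝ) → ℝ} (hg0 : 0 ≤ᵐ[μ] g) (hgi : Integrable g μ)
    (hdom : ∀ᵐ x ∂μ, ∀ j, |x j| ≤ g x) {t : ℝ} (ht : 0 < t) :
    μ {x | ∀ j, |x j| ≤ t}ᶜ ≤ ENNReal.ofReal ((∫ x, g x ∂μ) / t) := by
  calc μ {x | ∀ j, |x j| ≤ t}ᶜ ≤ μ {x | t ≤ g x} := by
        refine measure_mono_ae (hdom.mono fun x hx hxt => ?_)
        obtain ⟨j, hj⟩ := not_forall.1 hxt
        exact (not_le.1 hj).le.trans (hx j)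
    _ = ENNReal.ofReal (μ.real {x | t ≤ g x}) := (ofReal_measureReal (measure_ne_top μ _)).symm
    _ ≤ ENNReal.ofReal ((∫ x, g x ∂μ) / t) := by
        gcongr
        rw [le_div_iff₀' ht]
        exact mul_meas_ge_le_integral_of_nonneg hg0 hgi t

theorem ofReal_one_sub_le_of_measure_compl_le {α : Type*} [MeasurableSpace α] {μ : Measure α}
    [IsProbabilityMeasure μ] {s : Set α} {ε : ℝ} (hε : 0 ≤ ε) (hs : μ sᶜ ≤ ENNReal.ofReal ε) :
    ENNReal.ofReal (1 - ε) ≤ μ s := by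
  rw [ENNReal.ofReal_sub _ hε, ENNReal.ofReal_one, tsub_le_iff_right, ← measure_univ (μ := μ)]
  calc μ univ ≤ μ s + μ sᶜ := measure_univ_le_add_compl s
    _ ≤ μ s + ENNReal.ofReal ε := by gcongr

/-- for an isotropic mixture `θ` on `Δ_n` supported in `V ∩ Δ_n` for a
`k`-dimensional subspace `V`, and `C ≥ 5k²/ε`, the hypercube `H = [−C/n, C/n]ⁿ`
satisfies `θ(H) ≥ 1 − ε`. -/
theorem stmt12 (n k : ℕ) (hn : 1 ≤ n) (hk : 1 ≤ k) (ε C : ℝ) (hε : ε ∈ Set.Ioo (0:ℝ) 1)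
    (hC : C ≥ 5 * k ^ 2 / ε)
    (θ : Measure (Fin n → ℝ)) [IsProbabilityMeasure θ]
    (V : Submodule ℝ (Fin n → ℝ)) (hV : Module.finrank ℝ V = k)
    (hsupp : θ ((V : Set (Fin n → ℝ)) ∩ simplex n)ᶜ = 0)
    (hiso : Isotropic θ) :
    θ {x | ∀ j, |x j| ≤ C / n} ≥ ENNReal.ofReal (1 - ε) := by
  obtain ⟨hε0, -⟩ := hε
  have hn0 : (0 : ℝ) < n := by exact_mod_cast hn
  have hk1 : (1 : ℝ) ≤ k := by exact_mod_cast hk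
  have hC0 : 0 < C := (by positivity : (0 : ℝ) < 5 * k ^ 2 / ε).trans_le hC
  obtain ⟨u, hu⟩ := V.exists_apply_le_sum_of_nonneg
  have hae : ∀ᵐ x ∂θ, x ∈ V ∧ x ∈ simplex n := by
    simpa using measure_eq_zero_iff_ae_notMem.1 hsupp
  have hint := integrable_apply_of_ae_mem_simplex (hae.mono fun _ hx => hx.2)
  have hmean : ∫ x, ∑ i, x (u i) ∂θ ≤ k * (2 / n) := by
    rw [integral_finsetSum _ fun i _ => hint (u i)]
    calc ∑ i, ∫ x, x (u i) ∂θ ≤ ∑ _i : Fin (Module.finrank ℝ V), 2 / (n : ℝ) :=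
          Finset.sum_le_sum fun i _ => (hiso (u i)).2
      _ = k * (2 / n) := by simp [hV]
  have htail := measure_compl_cube_le_integral_div
    (hae.mono fun x hx => Finset.sum_nonneg fun i _ => hx.2.1 (u i))
    (integrable_finsetSum _ fun i _ => hint (u i))
    (hae.mono fun x hx j => (abs_of_nonneg (hx.2.1 j)).trans_le (hu x hx.1 hx.2.1 j))
    (div_pos hC0 hn0)
  refine ofReal_one_sub_le_of_measure_compl_le hε0.le (htail.trans (ofReal_le_ofReal ?_))
  calc (∫ x, ∑ i, x (u i) ∂θ) / (C / n) ≤ k * (2 / n) / (C / n) := by gcongr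
    _ = 2 * k / C := by field_simp
    _ ≤ ε := by
      rw [ge_iff_le, div_le_iff₀ hε0] at hC
      rw [div_le_iff₀ hC0]
      nlinarith
end

section
/- Let V ⊆ ℝ^n be a linear subspace and L > 0 be such that ‖v‖₂ ≤ L·‖v‖₁ for every v ∈ V. Let Q ⊆ V be a nonempty closed convex set and let Π_Q : ℝ^n → Q be the Euclidean nearest-point projection onto Q. Then for any probability measures μ, ν supported on V, Tran₁(Π_Q#μ, Π_Q#ν) ≤ √n · L · Tran₁(μ, ν). -/
open MeasureTheory ENNReal Set

/-- The `L1` transportation distance on `ℝⁿ` (Euclidean space), i.e. the Wasserstein-1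
distance with respect to the metric `d(x,y) = Σ_i |x_i − y_i|`. -/
noncomputable def tran1 {n : ℕ} (P Q : Measure (EuclideanSpace ℝ (Fin n))) : ℝ≥0∞ :=
  tran (fun x y => ∑ i, |x i - y i|) P Q

/-!
The nearest-point projection `π` onto a convex set is `1`-Lipschitz for the Euclidean norm. For
`x, y ∈ V` this gives `‖π x - π y‖₁ ≤ √n ‖π x - π y‖₂ ≤ √n ‖x - y‖₂ ≤ √n L ‖x - y‖₁`. Since
`μ` and `ν` live on `V`, every coupling `γ` of them is concentrated on `V × V`, and its image
under `π × π` is a coupling of `π#μ` and `π#ν` whose cost is at most `√n L` times that of `γ`.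
-/

section Projection

variable {E : Type*} [NormedAddCommGroup E] [InnerProductSpace ℝ E] {K : Set E}

theorem real_inner_sub_le_zero_of_forall_dist_le (hK : Convex ℝ K) {x p : E} (hp : p ∈ K)
    (hmin : ∀ y ∈ K, dist x p ≤ dist x y) {y : E} (hy : y ∈ K) :
    inner ℝ (x - p) (y - p) ≤ 0 := by
  have : Nonempty K := ⟨⟨p, hp⟩⟩
  refine (norm_eq_iInf_iff_real_inner_le_zero hK hp).1 ?_ y hy
  refine le_antisymm (le_ciInf fun w => by simpa [dist_eq_norm] using hmin w w.2) ?_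
  exact ciInf_le ⟨0, Set.forall_mem_range.2 fun _ => norm_nonneg _⟩ (⟨p, hp⟩ : K)

theorem lipschitzWith_one_of_forall_dist_le (hK : Convex ℝ K) {π : E → E}
    (hπ : ∀ x, π x ∈ K ∧ ∀ y ∈ K, dist x (π x) ≤ dist x y) : LipschitzWith 1 π := by
  refine LipschitzWith.of_dist_le_mul fun x y => ?_
  rw [NNReal.coe_one, one_mul, dist_eq_norm, dist_eq_norm]
  have hx := real_inner_sub_le_zero_of_forall_dist_le hK (hπ x).1 (hπ x).2 (hπ y).1
  have hy := real_inner_sub_le_zero_of_forall_dist_le hK (hπ y).1 (hπ y).2 (hπ x).1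
  have hsplit : ‖π x - π y‖ ^ 2 = inner ℝ (π x - π y) (x - y)
      + inner ℝ (x - π x) (π y - π x) + inner ℝ (y - π y) (π x - π y) := by
    rw [← real_inner_self_eq_norm_sq]
    simp only [inner_sub_left, inner_sub_right, real_inner_comm]
    ring
  have hsq : ‖π x - π y‖ ^ 2 ≤ ‖π x - π y‖ * ‖x - y‖ :=
    calc ‖π x - π y‖ ^ 2 ≤ inner ℝ (π x - π y) (x - y) := by linarith
      _ ≤ ‖π x - π y‖ * ‖x - y‖ := real_inner_le_norm _ _
  nlinarith [norm_nonneg (π x - π y), norm_nonneg (x - y)]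

end Projection

theorem EuclideanSpace.sum_abs_le_sqrt_card_mul_norm {ι : Type*} [Fintype ι]
    (v : EuclideanSpace ℝ ι) : ∑ i, |v i| ≤ √(Fintype.card ι) * ‖v‖ := by
  rw [EuclideanSpace.norm_eq, ← Real.sqrt_mul (Nat.cast_nonneg _)]
  refine Real.le_sqrt_of_sq_le ?_
  simpa [sq_abs] using sq_sum_le_card_mul_sum_sq (s := Finset.univ) (f := fun i => |v i|)

section Transport

variable {X Y : Type*} [MeasurableSpace X] [MeasurableSpace Y]

theorem tran_le_lintegral {d : X → X → ℝ} {P Q : Measure X} {γ : Measure (X × X)}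
    (hγ₁ : γ.map Prod.fst = P) (hγ₂ : γ.map Prod.snd = Q) :
    tran d P Q ≤ ∫⁻ p, ENNReal.ofReal (d p.1 p.2) ∂γ :=
  iInf₂_le γ ⟨hγ₁, hγ₂⟩

theorem MeasureTheory.Measure.map_prodMap_map_fst {f : X → Y} (hf : Measurable f) (γ : Measure (X × X)) :
    (γ.map (Prod.map f f)).map Prod.fst = (γ.map Prod.fst).map f := by
  rw [Measure.map_map measurable_fst (hf.prodMap hf), Measure.map_map hf measurable_fst]
  rfl

theorem MeasureTheory.Measure.map_prodMap_map_snd {f : X → Y} (hf : Measurable f) (γ : Measure (X × X)) :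
    (γ.map (Prod.map f f)).map Prod.snd = (γ.map Prod.snd).map f := by
  rw [Measure.map_map measurable_snd (hf.prodMap hf), Measure.map_map hf measurable_snd]
  rfl

theorem ae_mem_of_map_eq {Z : Type*} [MeasurableSpace Z] {γ : Measure Z} {g : Z → X}
    (hg : Measurable g)
    {P : Measure X} (hγ : γ.map g = P) {S : Set X} (hS : P Sᶜ = 0) : ∀ᵐ p ∂γ, g p ∈ S :=
  ae_iff.2 <| nonpos_iff_eq_zero.1 <| (Measure.le_map_apply hg.aemeasurable Sᶜ).trans_eq (hγ ▸ hS)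

theorem tran_map_le {d : X → X → ℝ} {d' : Y → Y → ℝ} {f : X → Y} (hf : Measurable f)
    {S : Set X} {c : ℝ} (hc : 0 < c) (hfS : ∀ x ∈ S, ∀ y ∈ S, d' (f x) (f y) ≤ c * d x y)
    {P Q : Measure X} (hP : P Sᶜ = 0) (hQ : Q Sᶜ = 0) :
    tran d' (P.map f) (Q.map f) ≤ ENNReal.ofReal c * tran d P Q := by
  have hc' : ENNReal.ofReal c ≠ 0 := by positivity
  simp only [tran, ENNReal.mul_iInf_of_ne hc' ENNReal.ofReal_ne_top]
  refine le_iInf₂ fun γ ⟨hγ₁, hγ₂⟩ => ?_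
  have hS : ∀ᵐ p ∂γ, p.1 ∈ S ∧ p.2 ∈ S :=
    (ae_mem_of_map_eq measurable_fst hγ₁ hP).and (ae_mem_of_map_eq measurable_snd hγ₂ hQ)
  calc _ ≤ ∫⁻ p, ENNReal.ofReal (d' p.1 p.2) ∂γ.map (Prod.map f f) :=
        tran_le_lintegral (by rw [Measure.map_prodMap_map_fst hf, hγ₁])
          (by rw [Measure.map_prodMap_map_snd hf, hγ₂])
    _ ≤ ∫⁻ p, ENNReal.ofReal (d' (f p.1) (f p.2)) ∂γ := lintegral_map_le _ _
    _ ≤ ∫⁻ p, ENNReal.ofReal c * ENNReal.ofReal (d p.1 p.2) ∂γ := by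
        refine lintegral_mono_ae (hS.mono fun p hp => ?_)
        rw [← ENNReal.ofReal_mul hc.le]
        exact ENNReal.ofReal_le_ofReal (hfS _ hp.1 _ hp.2)
    _ = ENNReal.ofReal c * ∫⁻ p, ENNReal.ofReal (d p.1 p.2) ∂γ :=
        lintegral_const_mul' _ _ ENNReal.ofReal_ne_top

end Transport

theorem stmt15_general (n : ℕ) (hn : 1 ≤ n) (V : Submodule ℝ (EuclideanSpace ℝ (Fin n)))
    (L : ℝ) (hL : 0 < L)
    (hV : ∀ v ∈ V, ‖v‖ ≤ L * ∑ i, |v i|)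
    (Q : Set (EuclideanSpace ℝ (Fin n)))
    (hQconvex : Convex ℝ Q)
    (π : EuclideanSpace ℝ (Fin n) → EuclideanSpace ℝ (Fin n))
    (hπ : ∀ x, π x ∈ Q ∧ ∀ y ∈ Q, dist x (π x) ≤ dist x y)
    (μ ν : Measure (EuclideanSpace ℝ (Fin n)))
    (hμ : μ ((V : Set (EuclideanSpace ℝ (Fin n))))ᶜ = 0)
    (hν : ν ((V : Set (EuclideanSpace ℝ (Fin n))))ᶜ = 0) :
    tran1 (μ.map π) (ν.map π) ≤ ENNReal.ofReal (Real.sqrt n * L) * tran1 μ ν := by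
  have hπ_lip := lipschitzWith_one_of_forall_dist_le hQconvex hπ
  have hc : 0 < √n * L := mul_pos (Real.sqrt_pos.2 (by exact_mod_cast hn)) hL
  refine tran_map_le hπ_lip.continuous.measurable hc (fun x hx y hy => ?_) hμ hν
  have hxy : ‖x - y‖ ≤ L * ∑ i, |x i - y i| := by simpa using hV _ (V.sub_mem hx hy)
  calc ∑ i, |π x i - π y i| ≤ √n * ‖π x - π y‖ := by
        simpa using EuclideanSpace.sum_abs_le_sqrt_card_mul_norm (π x - π y)
    _ ≤ √n * ‖x - y‖ := by
        gcongr
        simpa [dist_eq_norm] using hπ_lip.dist_le_mul x y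
    _ ≤ √n * (L * ∑ i, |x i - y i|) := by gcongr
    _ = √n * L * ∑ i, |x i - y i| := by ring

/-- let `V ⊆ ℝⁿ` be a subspace with `‖v‖₂ ≤ L‖v‖₁` on `V`, let `Q ⊆ V` be
nonempty closed convex, and let `π` be the Euclidean nearest-point projection onto `Q`.
Then for probability measures `μ, ν` supported on `V`,
`Tran₁(π#μ, π#ν) ≤ √n · L · Tran₁(μ, ν)`. -/
theorem stmt15 (n : ℕ) (hn : 1 ≤ n) (V : Submodule ℝ (EuclideanSpace ℝ (Fin n)))
    (L : ℝ) (hL : 0 < L)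
    (hV : ∀ v ∈ V, ‖v‖ ≤ L * ∑ i, |v i|)
    (Q : Set (EuclideanSpace ℝ (Fin n))) (hQV : Q ⊆ (V : Set (EuclideanSpace ℝ (Fin n))))
    (hQne : Q.Nonempty) (hQclosed : IsClosed Q) (hQconvex : Convex ℝ Q)
    (π : EuclideanSpace ℝ (Fin n) → EuclideanSpace ℝ (Fin n))
    (hπ : ∀ x, π x ∈ Q ∧ ∀ y ∈ Q, dist x (π x) ≤ dist x y)
    (μ ν : Measure (EuclideanSpace ℝ (Fin n)))
    [IsProbabilityMeasure μ] [IsProbabilityMeasure ν]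
    (hμ : μ ((V : Set (EuclideanSpace ℝ (Fin n))))ᶜ = 0)
    (hν : ν ((V : Set (EuclideanSpace ℝ (Fin n))))ᶜ = 0) :
    tran1 (μ.map π) (ν.map π) ≤ ENNReal.ofReal (Real.sqrt n * L) * tran1 μ ν :=
  stmt15_general n hn V L hL hV Q hQconvex π hπ μ ν hμ hν
end
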